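/- Let H be a complex Hilbert space, (φ̃ₙ), (Ψ̃ₙ) sequences in H, (αₙ) reals with 0 = α₀ < α₁ < α₂ < …, α₀! = 1, α_k! = α₁⋯α_k, and let ρ ∈ (0, ∞]. Assume: (i) for every |z| < ρ the series N(|z|) = (Σ_k |z|^{2k}/(α_k!)²)^{−1/2}, φ(z) = N(|z|) Σ_k (z^k/α_k!) φ̃_k and Ψ(z) = N(|z|) Σ_k (z^k/α_k!) Ψ̃_k converge; (ii) there is a subspace G ⊆ H such that for all f, g ∈ G, Σ_{n≥0} ⟨f, φ̃ₙ⟩⟨Ψ̃ₙ, g⟩ = ⟨f, g⟩; (iii) there is a positive measure λ on [0, ρ) with ∫₀^ρ r^{2k} dλ(r) = (α_k!)²/(2π) for all k ≥ 0. Then, writing z = r e^{iθ} and dν(z, z̄) = N(r)^{−2} dλ(r) dθ, for all f, g ∈ G: ∫_{C_ρ(0)} ⟨f, Ψ(z)⟩⟨φ(z), g⟩ dν(z, z̄) = ⟨f, g⟩ and ∫_{C_ρ(0)} ⟨f, φ(z)⟩⟨Ψ(z), g⟩ dν(z, z̄) = ⟨f, g⟩. -/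

import Mathlib

/-!
On the circle `|z| = r` the defining series make `⟪f, Ψ(z)⟫ ⟪φ(z), g⟫ / N(r)²` an absolutely
convergent double series with terms proportional to `r^(k+l) e^{i(k-l)θ}`; integrating in `θ`
kills the off-diagonal terms and leaves `2π Σ_k r^(2k) ⟪f, Ψ̃_k⟫ ⟪φ̃_k, g⟫ / (α_k!)²`. The moment
condition turns the radial integral of `r^(2k)` into `(α_k!)² / 2π`, so what remains is the
quasi-basis series `Σ_k ⟪f, Ψ̃_k⟫ ⟪φ̃_k, g⟫ = ⟪f, g⟫` (conjugated, for the first identity).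
Summation and integration may be exchanged because a summable series in `ℂ` converges absolutely.
-/

open Filter MeasureTheory
open scoped ENNReal InnerProductSpace

/-- The generalized factorial `α_k! = α₁ α₂ ⋯ α_k`, with `α₀! = 1`. -/
noncomputable def afact (α : ℕ → ℝ) : ℕ → ℝ
  | 0 => 1
  | n + 1 => afact α n * α (n + 1)

open scoped ComplexConjugate

theorem afact_pos {α : ℕ → ℝ} (hα0 : α 0 = 0) (hα : StrictMono α) (k : ℕ) : 0 < afact α k := by
  induction k with
  | zero => exact one_pos
  | succ n ih => exact mul_pos ih (hα0 ▸ hα n.succ_pos)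

theorem setIntegral_Ico_exp_int_mul_I (n : ℤ) :
    ∫ θ in Set.Ico 0 (2 * Real.pi), Complex.exp (n * θ * Complex.I) =
      if n = 0 then (2 * Real.pi : ℂ) else 0 := by
  rw [integral_Ico_eq_integral_Ioo, ← integral_Ioc_eq_integral_Ioo,
    ← intervalIntegral.integral_of_le Real.two_pi_pos.le]
  split_ifs with hn
  · simp [hn]
  · have hc : (n : ℂ) * Complex.I ≠ 0 := by simp [hn]
    simp_rw [mul_right_comm _ _ Complex.I]
    have h2π : Complex.exp (n * Complex.I * ↑(2 * Real.pi)) = 1 := by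
      rw [← Complex.exp_int_mul_two_pi_mul_I n]; push_cast; ring_nf
    rw [integral_exp_mul_complex hc, h2π]
    simp

theorem tsum_prod_ite_fst_eq_snd {α M : Type*} [AddCommMonoid M] [TopologicalSpace M]
    [DecidableEq α] (g : α → M) :
    ∑' p : α × α, (if p.1 = p.2 then g p.1 else 0) = ∑' a, g a := by
  refine Eq.trans ?_ ((Function.Injective.tsum_eq (g := fun a : α => (a, a))
    (fun a b h => congrArg Prod.fst h) ?_)) |>.symm
  · simp
  · intro p hp
    by_cases h : p.1 = p.2
    · exact ⟨p.1, Prod.ext rfl h⟩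
    · simp [h] at hp

theorem norm_ofReal_mul_exp_mul_I (r θ : ℝ) :
    ‖(r : ℂ) * Complex.exp (θ * Complex.I)‖ = |r| := by
  simp [Complex.norm_exp_ofReal_mul_I]

theorem pow_mul_conj_pow_ofReal_mul_exp_mul_I (r θ : ℝ) (k l : ℕ) :
    ((r : ℂ) * Complex.exp (θ * Complex.I)) ^ k *
      conj (((r : ℂ) * Complex.exp (θ * Complex.I)) ^ l) =
      (r : ℂ) ^ (k + l) * Complex.exp (((k : ℤ) - l : ℤ) * θ * Complex.I) := by
  simp only [map_pow, map_mul, map_natCast, Complex.conj_ofReal, ← Complex.exp_conj,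
    Complex.conj_I, mul_pow, ← Complex.exp_nat_mul]
  rw [pow_add, mul_mul_mul_comm, ← Complex.exp_add]
  push_cast
  ring_nf

theorem setIntegral_Ico_mul_conj_of_hasSum {a b : ℕ → ℂ} {r : ℝ} {F B : ℝ → ℂ}
    (hF : ∀ θ : ℝ, HasSum (fun k => a k * ((r : ℂ) * Complex.exp (θ * Complex.I)) ^ k) (F θ))
    (hB : ∀ θ : ℝ, HasSum (fun k => b k * ((r : ℂ) * Complex.exp (θ * Complex.I)) ^ k) (B θ)) :
    ∫ θ in Set.Ico 0 (2 * Real.pi), F θ * conj (B θ) =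
      2 * Real.pi * ∑' k, a k * conj (b k) * (r : ℂ) ^ (2 * k) := by
  set z : ℝ → ℂ := fun θ => (r : ℂ) * Complex.exp (θ * Complex.I)
  set T : ℕ × ℕ → ℝ → ℂ := fun p θ => a p.1 * z θ ^ p.1 * conj (b p.2 * z θ ^ p.2)
  have hnorm_term : ∀ (c : ℕ → ℂ) θ k, ‖c k * z θ ^ k‖ = ‖c k‖ * |r| ^ k := fun c θ k => by
    rw [norm_mul, norm_pow, norm_ofReal_mul_exp_mul_I]
  have hsumm : ∀ (c : ℕ → ℂ) (C : ℝ → ℂ), (∀ θ, HasSum (fun k => c k * z θ ^ k) (C θ)) →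
      Summable fun k => ‖c k‖ * |r| ^ k := fun c C hC =>
    ((hC 0).summable.norm).congr (hnorm_term c 0)
  have hT_norm : ∀ p θ, ‖T p θ‖ = ‖a p.1‖ * |r| ^ p.1 * (‖b p.2‖ * |r| ^ p.2) := fun p θ => by
    rw [norm_mul, RCLike.norm_conj, hnorm_term, hnorm_term]
  have hT_integral : ∀ p : ℕ × ℕ, ∫ θ in Set.Ico 0 (2 * Real.pi), T p θ =
      if p.1 = p.2 then 2 * Real.pi * (a p.1 * conj (b p.1) * (r : ℂ) ^ (2 * p.1)) else 0 := by
    rintro ⟨k, l⟩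
    have hT : T (k, l) = fun θ : ℝ => a k * conj (b l) * (r : ℂ) ^ (k + l) *
        Complex.exp (((k : ℤ) - l : ℤ) * θ * Complex.I) := by
      ext θ
      simp only [T, map_mul, mul_mul_mul_comm _ _ (conj (b l)), z,
        pow_mul_conj_pow_ofReal_mul_exp_mul_I]
      ring
    rw [hT, integral_const_mul, setIntegral_Ico_exp_int_mul_I]
    by_cases hkl : k = l
    · subst hkl
      simp only [sub_self, ↓reduceIte]
      ring
    · simp [hkl, sub_eq_zero]
  have hpoint : ∀ θ, F θ * conj (B θ) = ∑' p, T p θ := fun θ => by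
    rw [← (hF θ).tsum_eq, ← (hB θ).tsum_eq, Complex.conj_tsum]
    refine tsum_mul_tsum_of_summable_norm ?_ ?_
    · exact (hsumm a F hF).congr fun k => (hnorm_term a θ k).symm
    · exact (hsumm b B hB).congr fun k => by rw [RCLike.norm_conj, hnorm_term]
  have hT_int : ∀ p, Integrable (T p) (volume.restrict (Set.Ico 0 (2 * Real.pi))) := fun p =>
    (Continuous.integrableOn_Icc (by fun_prop)).mono_set Set.Ico_subset_Icc_self
  have hT_summ : Summable fun p => ∫ θ in Set.Ico 0 (2 * Real.pi), ‖T p θ‖ := by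
    simp only [hT_norm, setIntegral_const, smul_eq_mul]
    exact ((hsumm a F hF).mul_of_nonneg (hsumm b B hB) (fun _ => by positivity)
      (fun _ => by positivity)).mul_left _
  rw [integral_congr_ae (ae_of_all _ hpoint), ← integral_tsum_of_summable_integral_norm hT_int
    hT_summ, tsum_congr hT_integral,
    tsum_prod_ite_fst_eq_snd (fun k => 2 * Real.pi * (a k * conj (b k) * (r : ℂ) ^ (2 * k))),
    tsum_mul_left]

theorem setIntegral_inner_mul_inner_of_hasSum {H : Type*} [NormedAddCommGroup H]
    [InnerProductSpace ℂ H] {Pt Qt : ℕ → H} {a : ℕ → ℝ} {r N : ℝ} (hN : N ≠ 0) {P Q : ℝ → H}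
    (hP : ∀ θ : ℝ, HasSum (fun k =>
      ((N : ℂ) * ((r : ℂ) * Complex.exp (θ * Complex.I)) ^ k / (a k : ℂ)) • Pt k) (P θ))
    (hQ : ∀ θ : ℝ, HasSum (fun k =>
      ((N : ℂ) * ((r : ℂ) * Complex.exp (θ * Complex.I)) ^ k / (a k : ℂ)) • Qt k) (Q θ))
    (f g : H) :
    ∫ θ in Set.Ico 0 (2 * Real.pi), ⟪f, Q θ⟫_ℂ * ⟪P θ, g⟫_ℂ * ((N : ℂ) ^ 2)⁻¹ =
      2 * Real.pi * ∑' k, ⟪f, Qt k⟫_ℂ * ⟪Pt k, g⟫_ℂ / (a k : ℂ) ^ 2 * (r : ℂ) ^ (2 * k) := by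
  have hN' : (N : ℂ) ≠ 0 := Complex.ofReal_ne_zero.mpr hN
  have hcoeff : ∀ (v : ℕ → H) (V : ℝ → H) (h : H),
      (∀ θ : ℝ, HasSum (fun k =>
        ((N : ℂ) * ((r : ℂ) * Complex.exp (θ * Complex.I)) ^ k / (a k : ℂ)) • v k) (V θ)) →
      ∀ θ : ℝ, HasSum (fun k => ⟪h, v k⟫_ℂ / a k * ((r : ℂ) * Complex.exp (θ * Complex.I)) ^ k)
        ((N : ℂ)⁻¹ * ⟪h, V θ⟫_ℂ) := fun v V h hV θ => by
    have h' := ((hV θ).mapL (innerSL ℂ h)).mul_left (N : ℂ)⁻¹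
    simp only [innerSL_apply_apply, inner_smul_right] at h'
    refine h'.congr_fun fun k => ?_
    rw [mul_div_assoc, mul_assoc, inv_mul_cancel_left₀ hN']
    ring
  have hintegrand : ∀ θ, ⟪f, Q θ⟫_ℂ * ⟪P θ, g⟫_ℂ * ((N : ℂ) ^ 2)⁻¹ =
      (N : ℂ)⁻¹ * ⟪f, Q θ⟫_ℂ * conj ((N : ℂ)⁻¹ * ⟪g, P θ⟫_ℂ) := fun θ => by
    simp only [map_mul, map_inv₀, Complex.conj_ofReal, inner_conj_symm]
    ring
  simp only [hintegrand, setIntegral_Ico_mul_conj_of_hasSum (hcoeff Qt Q f hQ)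
    (hcoeff Pt P g hP), map_div₀, Complex.conj_ofReal, inner_conj_symm]
  congr 2 with k
  ring

theorem integral_tsum_mul_pow_two_mul {μ : Measure ℝ} {c : ℕ → ℂ}
    (hint : ∀ k, Integrable (fun r : ℝ => r ^ (2 * k)) μ)
    (hc : Summable fun k => ‖c k‖ * ∫ r, r ^ (2 * k) ∂μ) :
    ∫ r, ∑' k, c k * (r : ℂ) ^ (2 * k) ∂μ = ∑' k, c k * ∫ r, r ^ (2 * k) ∂μ := by
  have hcast : ∀ k (r : ℝ), (r : ℂ) ^ (2 * k) = ((r ^ (2 * k) : ℝ) : ℂ) := fun k r => by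
    push_cast; rfl
  simp only [hcast]
  rw [← integral_tsum_of_summable_integral_norm]
  · simp only [integral_const_mul, integral_complex_ofReal]
  · exact fun k => (hint k).ofReal.const_mul _
  · refine hc.congr fun k => ?_
    simp only [norm_mul, Complex.norm_real, Real.norm_eq_abs, integral_const_mul]
    congr 1
    refine integral_congr_ae (ae_of_all _ fun r => ?_)
    simp [pow_mul, abs_of_nonneg (sq_nonneg r)]

theorem one_le_tsum_pow_two_mul_div_sq {a : ℕ → ℝ} (ha0 : a 0 = 1) {r : ℝ}
    (h : Summable fun k => r ^ (2 * k) / a k ^ 2) : 1 ≤ ∑' k, r ^ (2 * k) / a k ^ 2 := by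
  simpa [ha0] using h.le_tsum 0 fun k _ => div_nonneg (by rw [pow_mul]; positivity) (sq_nonneg _)

theorem integral_setIntegral_inner_mul_inner_eq {H : Type*} [NormedAddCommGroup H]
    [InnerProductSpace ℂ H] {Pt Qt : ℕ → H} {a : ℕ → ℝ} (ha0 : a 0 = 1) (ha : ∀ k, a k ≠ 0)
    {ρ : ℝ≥0∞} {N : ℝ → ℝ} (hN : ∀ r : ℝ, N r = (√(∑' k : ℕ, r ^ (2 * k) / a k ^ 2))⁻¹)
    {Pz Qz : ℂ → H}
    (hsum : ∀ z : ℂ, ENNReal.ofReal ‖z‖ < ρ → Summable fun k : ℕ => ‖z‖ ^ (2 * k) / a k ^ 2)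
    (hPz : ∀ z : ℂ, ENNReal.ofReal ‖z‖ < ρ →
      HasSum (fun k : ℕ => ((N ‖z‖ : ℂ) * z ^ k / (a k : ℂ)) • Pt k) (Pz z))
    (hQz : ∀ z : ℂ, ENNReal.ofReal ‖z‖ < ρ →
      HasSum (fun k : ℕ => ((N ‖z‖ : ℂ) * z ^ k / (a k : ℂ)) • Qt k) (Qz z))
    {lam : Measure ℝ} (hlam : ∀ᵐ r ∂lam, 0 ≤ r ∧ ENNReal.ofReal r < ρ)
    (hmoment : ∀ k : ℕ, ∫ r : ℝ, r ^ (2 * k) ∂lam = a k ^ 2 / (2 * Real.pi))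
    {f g : H} {S : ℂ} (hS : HasSum (fun n : ℕ => ⟪f, Qt n⟫_ℂ * ⟪Pt n, g⟫_ℂ) S) :
    (∫ r : ℝ, (∫ θ in Set.Ico (0 : ℝ) (2 * Real.pi),
        ⟪f, Qz ((r : ℂ) * Complex.exp (θ * Complex.I))⟫_ℂ *
        ⟪Pz ((r : ℂ) * Complex.exp (θ * Complex.I)), g⟫_ℂ *
        ((N r : ℂ) ^ 2)⁻¹) ∂lam) = S := by
  set w : ℕ → ℂ := fun n => ⟪f, Qt n⟫_ℂ * ⟪Pt n, g⟫_ℂ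
  have hangular : ∀ᵐ r : ℝ ∂lam, (∫ θ in Set.Ico (0 : ℝ) (2 * Real.pi),
      ⟪f, Qz ((r : ℂ) * Complex.exp (θ * Complex.I))⟫_ℂ *
      ⟪Pz ((r : ℂ) * Complex.exp (θ * Complex.I)), g⟫_ℂ * ((N r : ℂ) ^ 2)⁻¹) =
        2 * Real.pi * ∑' k, w k / (a k : ℂ) ^ 2 * (r : ℂ) ^ (2 * k) := by
    filter_upwards [hlam] with r ⟨hr0, hrρ⟩
    have hz : ∀ θ : ℝ, ‖(r : ℂ) * Complex.exp (θ * Complex.I)‖ = r := fun θ => by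
      rw [norm_ofReal_mul_exp_mul_I, abs_of_nonneg hr0]
    have hzρ : ∀ θ : ℝ, ENNReal.ofReal ‖(r : ℂ) * Complex.exp (θ * Complex.I)‖ < ρ :=
      fun θ => (hz θ).symm ▸ hrρ
    have hNr : N r ≠ 0 := by
      have hsum_r := hsum _ (hzρ 0)
      rw [hz 0] at hsum_r
      have hone := one_le_tsum_pow_two_mul_div_sq ha0 hsum_r
      rw [hN]
      exact inv_ne_zero (Real.sqrt_ne_zero'.mpr (by linarith))
    exact setIntegral_inner_mul_inner_of_hasSum hNr
      (fun θ => by have h := hPz _ (hzρ θ); rwa [hz θ] at h)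
      (fun θ => by have h := hQz _ (hzρ θ); rwa [hz θ] at h) f g
  have hmoment_pos : ∀ k, 0 < ∫ r : ℝ, r ^ (2 * k) ∂lam := fun k => by
    rw [hmoment]; have := ha k; positivity
  have hterm : ∀ k, w k / (a k : ℂ) ^ 2 * ↑(∫ r : ℝ, r ^ (2 * k) ∂lam) =
      (2 * Real.pi : ℂ)⁻¹ * w k := fun k => by
    rw [hmoment]
    push_cast
    field_simp [ha k, Real.pi_ne_zero]
  have hsumm : Summable fun k => ‖w k / (a k : ℂ) ^ 2‖ * ∫ r : ℝ, r ^ (2 * k) ∂lam := by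
    refine (hS.summable.norm.mul_left (2 * Real.pi)⁻¹).congr fun k => ?_
    rw [hmoment, norm_div, norm_pow, Complex.norm_real, Real.norm_eq_abs, sq_abs]
    field_simp [ha k]
  rw [integral_congr_ae hangular, integral_const_mul,
    integral_tsum_mul_pow_two_mul (fun k => .of_integral_ne_zero (hmoment_pos k).ne') hsumm,
    tsum_congr hterm, tsum_mul_left, hS.tsum_eq]
  field_simp [Real.pi_ne_zero]

theorem stmt3_general (H : Type*) [NormedAddCommGroup H] [InnerProductSpace ℂ H]
    (φt Ψt : ℕ → H) (α : ℕ → ℝ)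
    (hα0 : α 0 = 0) (hαmono : StrictMono α)
    (ρ : ℝ≥0∞)
    (Nval : ℝ → ℝ)
    (hNval : ∀ r : ℝ, Nval r = (Real.sqrt (∑' k : ℕ, r ^ (2 * k) / (afact α k) ^ 2))⁻¹)
    (φz Ψz : ℂ → H)
    -- (i) : the defining series of `N(|z|)`, `φ(z)` and `Ψ(z)` all converge for `|z| < ρ`
    (hsum : ∀ z : ℂ, ENNReal.ofReal ‖z‖ < ρ →
      Summable (fun k : ℕ => ‖z‖ ^ (2 * k) / (afact α k) ^ 2))
    (hφz : ∀ z : ℂ, ENNReal.ofReal ‖z‖ < ρ →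
      HasSum (fun k : ℕ => ((Nval ‖z‖ : ℂ) * z ^ k / (afact α k : ℂ)) • φt k) (φz z))
    (hΨz : ∀ z : ℂ, ENNReal.ofReal ‖z‖ < ρ →
      HasSum (fun k : ℕ => ((Nval ‖z‖ : ℂ) * z ^ k / (afact α k : ℂ)) • Ψt k) (Ψz z))
    -- (ii) : `(F_φ̃, F_Ψ̃)` are `G`-quasi bases
    (G : Submodule ℂ H)
    (hG : ∀ f ∈ G, ∀ g ∈ G,
      HasSum (fun n : ℕ => ⟪f, φt n⟫_ℂ * ⟪Ψt n, g⟫_ℂ) ⟪f, g⟫_ℂ)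
    -- (iii) : the moment condition for the measure `λ` on `[0, ρ)`
    (lam : Measure ℝ)
    (hlamsupp : ∀ᵐ r ∂lam, 0 ≤ r ∧ ENNReal.ofReal r < ρ)
    (hmoment : ∀ k : ℕ, ∫ r : ℝ, r ^ (2 * k) ∂lam = (afact α k) ^ 2 / (2 * Real.pi)) :
    ∀ f ∈ G, ∀ g ∈ G,
      (∫ r : ℝ, (∫ θ in Set.Ico (0 : ℝ) (2 * Real.pi),
          ⟪f, Ψz ((r : ℂ) * Complex.exp (θ * Complex.I))⟫_ℂ *
          ⟪φz ((r : ℂ) * Complex.exp (θ * Complex.I)), g⟫_ℂ *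
          (((Nval r : ℂ)) ^ 2)⁻¹) ∂lam) = ⟪f, g⟫_ℂ ∧
      (∫ r : ℝ, (∫ θ in Set.Ico (0 : ℝ) (2 * Real.pi),
          ⟪f, φz ((r : ℂ) * Complex.exp (θ * Complex.I))⟫_ℂ *
          ⟪Ψz ((r : ℂ) * Complex.exp (θ * Complex.I)), g⟫_ℂ *
          (((Nval r : ℂ)) ^ 2)⁻¹) ∂lam) = ⟪f, g⟫_ℂ := by
  intro f hf g hg
  have hafact : ∀ k, afact α k ≠ 0 := fun k => (afact_pos hα0 hαmono k).ne'
  have hΨφ : HasSum (fun n => ⟪f, Ψt n⟫_ℂ * ⟪φt n, g⟫_ℂ) ⟪f, g⟫_ℂ := by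
    simpa [mul_comm, inner_conj_symm] using Complex.hasSum_conj'.mpr (hG g hg f hf)
  exact ⟨integral_setIntegral_inner_mul_inner_eq rfl hafact hNval hsum hφz hΨz hlamsupp hmoment
      hΨφ,
    integral_setIntegral_inner_mul_inner_eq rfl hafact hNval hsum hΨz hφz hlamsupp hmoment
      (hG f hf g hg)⟩

/-- resolution of the identity for the bi-coherent states
`φ(z), Ψ(z)` on the disc `C_ρ(0)`, written in polar coordinates
`z = r e^{iθ}`, `dν(z,z̄) = N(r)^{−2} dλ(r) dθ`. -/
theorem stmt3 (H : Type*) [NormedAddCommGroup H] [InnerProductSpace ℂ H]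
    [CompleteSpace H]
    (φt Ψt : ℕ → H) (α : ℕ → ℝ)
    (hα0 : α 0 = 0) (hαmono : StrictMono α)
    (ρ : ℝ≥0∞) (hρpos : 0 < ρ)
    (Nval : ℝ → ℝ)
    (hNval : ∀ r : ℝ, Nval r = (Real.sqrt (∑' k : ℕ, r ^ (2 * k) / (afact α k) ^ 2))⁻¹)
    (φz Ψz : ℂ → H)
    -- (i) : the defining series of `N(|z|)`, `φ(z)` and `Ψ(z)` all converge for `|z| < ρ`
    (hsum : ∀ z : ℂ, ENNReal.ofReal ‖z‖ < ρ →
      Summable (fun k : ℕ => ‖z‖ ^ (2 * k) / (afact α k) ^ 2))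
    (hφz : ∀ z : ℂ, ENNReal.ofReal ‖z‖ < ρ →
      HasSum (fun k : ℕ => ((Nval ‖z‖ : ℂ) * z ^ k / (afact α k : ℂ)) • φt k) (φz z))
    (hΨz : ∀ z : ℂ, ENNReal.ofReal ‖z‖ < ρ →
      HasSum (fun k : ℕ => ((Nval ‖z‖ : ℂ) * z ^ k / (afact α k : ℂ)) • Ψt k) (Ψz z))
    -- (ii) : `(F_φ̃, F_Ψ̃)` are `G`-quasi bases
    (G : Submodule ℂ H)
    (hG : ∀ f ∈ G, ∀ g ∈ G,
      HasSum (fun n : ℕ => ⟪f, φt n⟫_ℂ * ⟪Ψt n, g⟫_ℂ) ⟪f, g⟫_ℂ)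
    -- (iii) : the moment condition for the measure `λ` on `[0, ρ)`
    (lam : Measure ℝ)
    (hlamsupp : ∀ᵐ r ∂lam, 0 ≤ r ∧ ENNReal.ofReal r < ρ)
    (hmoment : ∀ k : ℕ, ∫ r : ℝ, r ^ (2 * k) ∂lam = (afact α k) ^ 2 / (2 * Real.pi)) :
    ∀ f ∈ G, ∀ g ∈ G,
      (∫ r : ℝ, (∫ θ in Set.Ico (0 : ℝ) (2 * Real.pi),
          ⟪f, Ψz ((r : ℂ) * Complex.exp (θ * Complex.I))⟫_ℂ *
          ⟪φz ((r : ℂ) * Complex.exp (θ * Complex.I)), g⟫_ℂ *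
          (((Nval r : ℂ)) ^ 2)⁻¹) ∂lam) = ⟪f, g⟫_ℂ ∧
      (∫ r : ℝ, (∫ θ in Set.Ico (0 : ℝ) (2 * Real.pi),
          ⟪f, φz ((r : ℂ) * Complex.exp (θ * Complex.I))⟫_ℂ *
          ⟪Ψz ((r : ℂ) * Complex.exp (θ * Complex.I)), g⟫_ℂ *
          (((Nval r : ℂ)) ^ 2)⁻¹) ∂lam) = ⟪f, g⟫_ℂ :=
  stmt3_general H φt Ψt α hα0 hαmono ρ Nval hNval φz Ψz hsum hφz hΨz G hG lam hlamsupp hmoment
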